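/- Let φ : ℝ² → ℝ² be the map φ(x¹,x²) = ( x¹ − x² cos x¹ / √(1 + cos² x¹), sin x¹ + x² / √(1 + cos² x¹) ). Then φ is differentiable, and the induced (pullback) metric, given by γ_{ij} = ∂_i φ · ∂_j φ (the entries of (Dφ)ᵀ(Dφ)), satisfies at every point (x¹,x²): γ₁₁ = ((1 + cos² x¹)^{3/2} + x² sin x¹)² / (1 + cos² x¹)², γ₁₂ = γ₂₁ = 0, and γ₂₂ = 1. -/

import Mathlib

/-!
Write φ(t, s) = c(t) + s • N(t), where c(t) = (t, sin t) is the S-curve and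
N(t) = (-cos t, 1) / |c'(t)| its unit normal, with |c'(t)| = √(1 + cos² t). Then
∂₂φ = N is a unit vector orthogonal to c', and ∂₁φ = c' + s • N'. Differentiating N
gives N' = (sin t / |c'|³) • c', so ∂₁φ = (1 + s sin t / |c'|³) • c' is again tangent
to the curve. Hence γ₁₂ = γ₂₁ = 0, γ₂₂ = 1 and
γ₁₁ = (1 + s sin t / |c'|³)² |c'|², which is the claimed formula since
(1 + cos² t)^{3/2} = |c'|³.
-/

open Real

noncomputable section

/-- Partial derivative in direction `j` (j = 0 ↦ ∂₁, j = 1 ↦ ∂₂) of a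
vector-valued function on ℝ². -/
def pdv (j : Fin 2) (f : ℝ × ℝ → ℝ × ℝ) (x : ℝ × ℝ) : ℝ × ℝ :=
  fderiv ℝ f x (if j = 0 then ((1 : ℝ), (0 : ℝ)) else ((0 : ℝ), (1 : ℝ)))

/-- Euclidean dot product on ℝ². -/
def dot (u v : ℝ × ℝ) : ℝ := u.1 * v.1 + u.2 * v.2

lemma dot_smul_left (a : ℝ) (u v : ℝ × ℝ) : dot (a • u) v = a * dot u v := by
  simp only [dot, Prod.smul_fst, Prod.smul_snd, smul_eq_mul]; ring

lemma dot_smul_right (a : ℝ) (u v : ℝ × ℝ) : dot u (a • v) = a * dot u v := by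
  simp only [dot, Prod.smul_fst, Prod.smul_snd, smul_eq_mul]; ring

lemma dot_comm (u v : ℝ × ℝ) : dot u v = dot v u := by
  simp only [dot]; ring

theorem hasFDerivAt_add_smul_comp_fst {E : Type*} [NormedAddCommGroup E] [NormedSpace ℝ E]
    {c N : ℝ → E} {c' N' : E} {x : ℝ × ℝ}
    (hc : HasDerivAt c c' x.1) (hN : HasDerivAt N N' x.1) :
    HasFDerivAt (fun y : ℝ × ℝ => c y.1 + y.2 • N y.1)
      ((ContinuousLinearMap.fst ℝ ℝ ℝ).smulRight (c' + x.2 • N') +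
        (ContinuousLinearMap.snd ℝ ℝ ℝ).smulRight (N x.1)) x := by
  have hc' := hc.hasFDerivAt.comp x hasFDerivAt_fst
  have hN' := hN.hasFDerivAt.comp x hasFDerivAt_fst
  refine (hc'.add (hasFDerivAt_snd.smul hN')).congr_fderiv ?_
  ext <;> simp [smul_add]

theorem HasFDerivAt.pdv_zero {f : ℝ × ℝ → ℝ × ℝ} {L : ℝ × ℝ →L[ℝ] ℝ × ℝ}
    {x : ℝ × ℝ} (hf : HasFDerivAt f L x) : pdv 0 f x = L (1, 0) := by
  simp [pdv, hf.fderiv]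

theorem HasFDerivAt.pdv_one {f : ℝ × ℝ → ℝ × ℝ} {L : ℝ × ℝ →L[ℝ] ℝ × ℝ}
    {x : ℝ × ℝ} (hf : HasFDerivAt f L x) : pdv 1 f x = L (0, 1) := by
  simp [pdv, hf.fderiv]

namespace SShaped

def speed (t : ℝ) : ℝ := √(1 + cos t ^ 2)

def curve (t : ℝ) : ℝ × ℝ := (t, sin t)

def tangent (t : ℝ) : ℝ × ℝ := (1, cos t)

def normal (t : ℝ) : ℝ × ℝ := (-(cos t / speed t), 1 / speed t)

lemma speed_pos (t : ℝ) : 0 < speed t := Real.sqrt_pos.mpr (by positivity)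

lemma speed_sq (t : ℝ) : speed t ^ 2 = 1 + cos t ^ 2 := Real.sq_sqrt (by positivity)

lemma rpow_three_halves_eq_speed_pow_three (t : ℝ) :
    (1 + cos t ^ 2) ^ ((3 : ℝ) / 2) = speed t ^ 3 := by
  rw [speed, Real.sqrt_eq_rpow, ← Real.rpow_natCast _ 3, ← Real.rpow_mul (by positivity)]
  norm_num

lemma hasDerivAt_speed (t : ℝ) : HasDerivAt speed (-(cos t * sin t) / speed t) t := by
  have h : HasDerivAt (fun t => 1 + cos t ^ 2) (2 * cos t ^ 1 * -sin t) t :=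
    ((Real.hasDerivAt_cos t).pow 2).const_add 1
  refine (h.sqrt (by positivity)).congr_deriv ?_
  have hv := (speed_pos t).ne'
  rw [show √(1 + cos t ^ 2) = speed t from rfl]
  field_simp

lemma hasDerivAt_curve (t : ℝ) : HasDerivAt curve (tangent t) t :=
  (hasDerivAt_id t).prodMk (Real.hasDerivAt_sin t)

lemma hasDerivAt_normal (t : ℝ) : HasDerivAt normal ((sin t / speed t ^ 3) • tangent t) t := by
  have hv := (speed_pos t).ne'
  have h₁ := ((Real.hasDerivAt_cos t).div (hasDerivAt_speed t) hv).neg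
  have h₂ := (hasDerivAt_const t (1 : ℝ)).div (hasDerivAt_speed t) hv
  refine (h₁.prodMk h₂).congr_deriv (Prod.ext ?_ ?_)
  · simp only [tangent, Prod.smul_mk, smul_eq_mul]
    field_simp
    linear_combination sin t * speed_sq t
  · simp only [tangent, Prod.smul_mk, smul_eq_mul]
    field_simp
    ring

lemma dot_tangent_normal (t : ℝ) : dot (tangent t) (normal t) = 0 := by
  simp only [dot, tangent, normal]
  ring

lemma dot_normal_normal (t : ℝ) : dot (normal t) (normal t) = 1 := by
  have hv := (speed_pos t).ne'
  simp only [dot, normal]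
  field_simp
  linear_combination -(speed_sq t)

lemma dot_tangent_tangent (t : ℝ) : dot (tangent t) (tangent t) = speed t ^ 2 := by
  simp only [dot, tangent, speed_sq]
  ring

end SShaped

open SShaped in
/-- the S-shaped map φ is differentiable and its induced
(pullback) metric γ_{ij} = ∂_i φ · ∂_j φ is
γ₁₁ = ((1 + cos² x¹)^{3/2} + x² sin x¹)² / (1 + cos² x¹)²,
γ₁₂ = γ₂₁ = 0, γ₂₂ = 1. -/
theorem induced_metric_S_shaped_map (φ : ℝ × ℝ → ℝ × ℝ)
    (hφ : ∀ x : ℝ × ℝ,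
      φ x = (x.1 - x.2 * cos x.1 / Real.sqrt (1 + cos x.1 ^ 2),
             sin x.1 + x.2 / Real.sqrt (1 + cos x.1 ^ 2))) :
    Differentiable ℝ φ ∧
    ∀ x : ℝ × ℝ,
      dot (pdv 0 φ x) (pdv 0 φ x)
        = ((1 + cos x.1 ^ 2) ^ ((3 : ℝ) / 2) + x.2 * sin x.1) ^ 2
            / (1 + cos x.1 ^ 2) ^ 2 ∧
      dot (pdv 0 φ x) (pdv 1 φ x) = 0 ∧
      dot (pdv 1 φ x) (pdv 0 φ x) = 0 ∧
      dot (pdv 1 φ x) (pdv 1 φ x) = 1 := by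
  have hφ_eq : φ = fun y => curve y.1 + y.2 • normal y.1 := by
    funext y
    rw [hφ y]
    simp only [curve, normal, speed, Prod.smul_mk, smul_eq_mul, Prod.mk_add_mk]
    congr 1 <;> ring
  have hderiv (x : ℝ × ℝ) :=
    hφ_eq ▸ hasFDerivAt_add_smul_comp_fst (hasDerivAt_curve x.1) (hasDerivAt_normal x.1)
  refine ⟨fun x => (hderiv x).differentiableAt, fun x => ?_⟩
  have h₀ : pdv 0 φ x = (1 + x.2 * (sin x.1 / speed x.1 ^ 3)) • tangent x.1 := by
    rw [(hderiv x).pdv_zero]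
    simp [smul_smul, add_smul]
  have h₁ : pdv 1 φ x = normal x.1 := by
    rw [(hderiv x).pdv_one]
    simp
  have hv := (speed_pos x.1).ne'
  rw [h₀, h₁, dot_comm (normal _), rpow_three_halves_eq_speed_pow_three]
  simp only [dot_smul_left, dot_smul_right, dot_tangent_tangent, dot_tangent_normal,
    dot_normal_normal, ← speed_sq, mul_zero, and_self, and_true]
  field_simp
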